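/- arXiv:2401.11259 — 4 statements merged into one kernel-verified Lean document; each statement's English description precedes it below -/
import Mathlib

section
/- Let u : ℝ × ℝ → ℂ and v : ℝ × ℝ → ℂ satisfy v(x,t) = ε conj(u(-x,t)) for ε = ±1. If (p(x,t), q(x,t)) satisfies p_x = (λ/2)p + u q and q_x = v p - (λ/2)q, then (P, Q) := (√(-ε) · conj(q(-x,t)), -ε√(-ε) · conj(p(-x,t))) satisfies P_x = (conj(λ)/2)P + u Q and Q_x = v P - (conj(λ)/2)Q. -/
/-! Reflecting `x ↦ -x` and conjugating the AKNS system for `(p, q)` turns the potentials into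
`conj u(-x)` and `conj v(-x)`; for real `ε` the symmetry `v = ε conj u(-·)` identifies these with
`ε⁻¹ v` and `ε u`, so swapping the components gives a solution with `λ` replaced by `conj λ`. -/

open Complex

theorem HasDerivAt.comp_neg {𝕜 F : Type*} [NontriviallyNormedField 𝕜] [NormedAddCommGroup F]
    [NormedSpace 𝕜 F] {f : 𝕜 → F} {f' : F} {x : 𝕜} (h : HasDerivAt f f' (-x)) :
    HasDerivAt (fun y => f (-y)) (-f') x := by
  simpa [Function.comp_def] using h.scomp x (hasDerivAt_neg x)

theorem HasDerivAt.conj_comp_neg {f : ℝ → ℂ} {f' : ℂ} {x : ℝ} (h : HasDerivAt f f' (-x)) :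
    HasDerivAt (fun y => starRingEnd ℂ (f (-y))) (-starRingEnd ℂ f') x := by
  simpa using h.comp_neg.star

theorem akns_nonlocal_reduction_spectral_general
    (u v : ℝ × ℝ → ℂ) (ε : ℂ) (hε : ε = 1 ∨ ε = -1)
    (hv : ∀ x t : ℝ, v (x, t) = ε * (starRingEnd ℂ) (u (-x, t)))
    (s lam : ℂ) (t : ℝ) (p q : ℝ → ℂ)
    (hp : ∀ x : ℝ, HasDerivAt p (lam / 2 * p x + u (x, t) * q x) x)
    (hq : ∀ x : ℝ, HasDerivAt q (v (x, t) * p x - lam / 2 * q x) x) :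
    (∀ x : ℝ, HasDerivAt (fun y : ℝ => s * (starRingEnd ℂ) (q (-y)))
      ((starRingEnd ℂ) lam / 2 * (s * (starRingEnd ℂ) (q (-x)))
        + u (x, t) * (-ε * s * (starRingEnd ℂ) (p (-x)))) x) ∧
    (∀ x : ℝ, HasDerivAt (fun y : ℝ => -ε * s * (starRingEnd ℂ) (p (-y)))
      (v (x, t) * (s * (starRingEnd ℂ) (q (-x)))
        - (starRingEnd ℂ) lam / 2 * (-ε * s * (starRingEnd ℂ) (p (-x)))) x) := by
  have hε_real : starRingEnd ℂ ε = ε := by rcases hε with rfl | rfl <;> simp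
  refine ⟨fun x => ?_, fun x => ?_⟩
  · refine ((hq (-x)).conj_comp_neg.const_mul s).congr_deriv ?_
    rw [hv]
    simp only [neg_neg, map_sub, map_mul, map_div₀, map_ofNat, hε_real, conj_conj]
    ring
  · refine ((hp (-x)).conj_comp_neg.const_mul (-ε * s)).congr_deriv ?_
    rw [hv]
    simp only [map_add, map_mul, map_div₀, map_ofNat]
    ring

/-- nonlocal conjugation symmetry `v(x,t) = ε conj(u(-x,t))` of AKNS potentials
produces a new solution of the space spectral problem with spectral parameter `conj λ`. -/
theorem akns_nonlocal_reduction_spectral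
    (u v : ℝ × ℝ → ℂ) (ε : ℂ) (hε : ε = 1 ∨ ε = -1)
    (hv : ∀ x t : ℝ, v (x, t) = ε * (starRingEnd ℂ) (u (-x, t)))
    (s lam : ℂ) (hs : s ^ 2 = -ε) (t : ℝ) (p q : ℝ → ℂ)
    (hp : ∀ x : ℝ, HasDerivAt p (lam / 2 * p x + u (x, t) * q x) x)
    (hq : ∀ x : ℝ, HasDerivAt q (v (x, t) * p x - lam / 2 * q x) x) :
    (∀ x : ℝ, HasDerivAt (fun y : ℝ => s * (starRingEnd ℂ) (q (-y)))
      ((starRingEnd ℂ) lam / 2 * (s * (starRingEnd ℂ) (q (-x)))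
        + u (x, t) * (-ε * s * (starRingEnd ℂ) (p (-x)))) x) ∧
    (∀ x : ℝ, HasDerivAt (fun y : ℝ => -ε * s * (starRingEnd ℂ) (p (-y)))
      (v (x, t) * (s * (starRingEnd ℂ) (q (-x)))
        - (starRingEnd ℂ) lam / 2 * (-ε * s * (starRingEnd ℂ) (p (-x)))) x) :=
  akns_nonlocal_reduction_spectral_general u v ε hε hv s lam t p q hp hq
end

section
/- For the 2×2 complex matrix L(λ) = diag(1/2, -1/2) + Σ_{j=1}^{N} (λ-α_j)^{-1} [[p_j q_j, -p_j²],[q_j², -p_j q_j]] + Σ_{j=1}^{N} (λ+α_j)^{-1} [[-p̂_j q̂_j, -ε p̂_j²],[ε q̂_j², p̂_j q̂_j]], the identity L(λ) = D L(-λ)' D holds, where D = diag(-ε, 1), ε² = 1, and L(-λ)' denotes L(-λ) with the roles of (p_j, q_j) and (p̂_j, q̂_j) interchanged. -/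
/-!
Conjugation by `D = diag(-ε, 1)` fixes `diag(1/2, -1/2)` and, because `ε² = 1`, sends each pole
coefficient of the form `[[a b, -a²], [b², -a b]]` to minus the coefficient
`[[-a b, -ε a²], [ε b², a b]]`, and vice versa. In `L(-λ)'` these coefficients sit at the poles
`-λ = ∓α_j`, i.e. they carry the factors `(-λ ± α_j)⁻¹ = -(λ ∓ α_j)⁻¹`, so the two sign changes
cancel and the terms of `D L(-λ)' D` are exactly those of `L(λ)`.
-/

open Matrix

section
variable {R : Type*} [CommRing R] {ε : R}

theorem conj_diag_neg_fin_two (hε : ε ^ 2 = 1) (a b c d : R) :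
    !![-ε, 0; 0, 1] * !![a, b; c, d] * !![-ε, 0; 0, 1] = !![a, -ε * b; -ε * c, d] := by
  simp only [mul_fin_two, mul_zero, zero_mul, add_zero, zero_add, mul_one, one_mul, mul_comm c]
  rw [show -ε * a * -ε = a by linear_combination a * hε]

theorem conj_diag_neg_residue (hε : ε ^ 2 = 1) (a b c : R) :
    !![-ε, 0; 0, 1] * !![a, -b; c, -a] * !![-ε, 0; 0, 1] = -!![-a, -ε * b; ε * c, a] := by
  rw [conj_diag_neg_fin_two hε]
  simp

theorem conj_diag_neg_residue_hat (hε : ε ^ 2 = 1) (a b c : R) :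
    !![-ε, 0; 0, 1] * !![-a, -ε * b; ε * c, a] * !![-ε, 0; 0, 1] = -!![a, -b; c, -a] := by
  rw [conj_diag_neg_fin_two hε]
  simp [← mul_assoc, ← sq, hε]

end

theorem lax_matrix_odd_even_symmetry_general
    (N : ℕ) (α : Fin N → ℂ)
    (p q ph qh : Fin N → ℂ) (ε lam : ℂ) (hε : ε ^ 2 = 1)
    (L : (Fin N → ℂ) → (Fin N → ℂ) → (Fin N → ℂ) → (Fin N → ℂ) → ℂ →
      Matrix (Fin 2) (Fin 2) ℂ)
    (hL : ∀ P Q Ph Qh μ, L P Q Ph Qh μ =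
      !![(1 : ℂ)/2, 0; 0, -(1 : ℂ)/2]
      + ∑ j, (μ - α j)⁻¹ • !![P j * Q j, -(P j)^2; (Q j)^2, -(P j * Q j)]
      + ∑ j, (μ + α j)⁻¹ • !![-(Ph j * Qh j), -ε * (Ph j)^2; ε * (Qh j)^2, Ph j * Qh j]) :
    L p q ph qh lam = !![-ε, 0; 0, 1] * L ph qh p q (-lam) * !![-ε, 0; 0, 1] := by
  rw [hL, hL]
  simp only [mul_add, add_mul, Matrix.mul_sum, Matrix.sum_mul, Matrix.mul_smul, Matrix.smul_mul,
    conj_diag_neg_residue hε, conj_diag_neg_residue_hat hε]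
  simp only [conj_diag_neg_fin_two hε, mul_zero, neg_add_eq_sub, ← neg_add', ← neg_sub lam,
    inv_neg, neg_smul_neg]
  rw [add_right_comm]

/-- the Lax matrix of the odd/even reduction satisfies
`L(λ) = D L(-λ)' D` with `D = diag(-ε,1)`, where `'` interchanges the roles of
`(p_j,q_j)` and `(p̂_j,q̂_j)`. -/
theorem lax_matrix_odd_even_symmetry
    (N : ℕ) (α : Fin N → ℂ) (hα0 : ∀ j, α j ≠ 0) (hαinj : Function.Injective α)
    (p q ph qh : Fin N → ℂ) (ε lam : ℂ) (hε : ε ^ 2 = 1)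
    (hlam : ∀ j, lam ≠ α j ∧ lam ≠ -α j)
    (L : (Fin N → ℂ) → (Fin N → ℂ) → (Fin N → ℂ) → (Fin N → ℂ) → ℂ →
      Matrix (Fin 2) (Fin 2) ℂ)
    (hL : ∀ P Q Ph Qh μ, L P Q Ph Qh μ =
      !![(1 : ℂ)/2, 0; 0, -(1 : ℂ)/2]
      + ∑ j, (μ - α j)⁻¹ • !![P j * Q j, -(P j)^2; (Q j)^2, -(P j * Q j)]
      + ∑ j, (μ + α j)⁻¹ • !![-(Ph j * Qh j), -ε * (Ph j)^2; ε * (Qh j)^2, Ph j * Qh j]) :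
    L p q ph qh lam = !![-ε, 0; 0, 1] * L ph qh p q (-lam) * !![-ε, 0; 0, 1] :=
  lax_matrix_odd_even_symmetry_general N α p q ph qh ε lam hε L hL
end

section
/- Let B be a symmetric complex g×g matrix with positive definite imaginary part satisfying conj(B) = -B - 𝒯ᵀ, where 𝒯 is the integer matrix with 0 on the diagonal and 1 elsewhere. Then the Riemann theta function θ with period matrix B satisfies conj(θ(ξ)) = θ(conj(ξ)) for all ξ ∈ ℂ^g. -/
/-!
Conjugate the theta series and substitute `z ↦ -z`. The relation `conj B = -B - 𝒯ᵀ` turns the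
conjugate of each term into the term of `θ (conj ξ)` at `-z`, times `exp (-π i ⟨𝒯ᵀ z, z⟩)`. This
factor is `1`, because `⟨𝒯ᵀ z, z⟩ = (∑ z_j)² - ∑ z_j²` is an even integer (`x² ≡ x mod 2`).
-/

open Complex Matrix ComplexConjugate

section

variable {ι : Type*} [Fintype ι]

theorem Int.even_sq_sum_sub_sum_sq (z : ι → ℤ) : Even ((∑ j, z j) ^ 2 - ∑ j, z j ^ 2) := by
  rw [even_iff_two_dvd]
  refine (ZMod.intCast_zmod_eq_zero_iff_dvd _ 2).mp ?_
  push_cast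
  simp only [ZMod.pow_card, sub_self]

theorem dotProduct_mulVec_eq_sq_sum_sub_sum_sq [DecidableEq ι] {R : Type*} [CommRing R]
    (T : Matrix ι ι R) (hT : ∀ j k, T j k = if j = k then 0 else 1) (v : ι → R) :
    (T *ᵥ v) ⬝ᵥ v = (∑ j, v j) ^ 2 - ∑ j, v j ^ 2 := by
  have hT_eq : T = of (fun _ _ => 1) - 1 := by
    ext j k
    rw [hT]
    by_cases h : j = k <;> simp [h, one_apply]
  have hones : (of fun _ _ => 1 : Matrix ι ι R) *ᵥ v = fun _ => ∑ k, v k := by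
    ext j
    simp [mulVec, dotProduct]
  rw [hT_eq, sub_mulVec, one_mulVec, hones, sub_dotProduct]
  simp [dotProduct, ← Finset.mul_sum, sq]

theorem conj_dotProduct_mulVec_of_real (B C : Matrix ι ι ℂ)
    (hB : ∀ j k, conj (B j k) = -B j k - C j k) {v : ι → ℂ} (hv : ∀ j, conj (v j) = v j) :
    conj ((B *ᵥ v) ⬝ᵥ v) = -((B *ᵥ v) ⬝ᵥ v) - (C *ᵥ v) ⬝ᵥ v := by
  have hBC : B.map conj = -B - C := by
    ext j k
    exact hB j k
  have hBv : conj ∘ (B *ᵥ v) = B.map conj *ᵥ (conj ∘ v) := funext (RingHom.map_mulVec _ _ _)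
  rw [RingHom.map_dotProduct, hBv, show conj ∘ v = v from funext hv, hBC, sub_mulVec, neg_mulVec,
    sub_dotProduct, neg_dotProduct]

noncomputable def thetaTerm (B : Matrix ι ι ℂ) (ξ : ι → ℂ) (z : ι → ℤ) : ℂ :=
  exp (Real.pi * I *
    ((B *ᵥ fun k => (z k : ℂ)) ⬝ᵥ (fun k => (z k : ℂ)) + 2 * ξ ⬝ᵥ fun k => (z k : ℂ)))

theorem conj_thetaTerm [DecidableEq ι] (B T : Matrix ι ι ℂ)
    (hT : ∀ j k, T j k = if j = k then 0 else 1) (hB : ∀ j k, conj (B j k) = -B j k - T j k)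
    (ξ : ι → ℂ) (z : ι → ℤ) :
    conj (thetaTerm B ξ z) = thetaTerm B (fun j => conj (ξ j)) (-z) := by
  unfold thetaTerm
  set v : ι → ℂ := fun k => (z k : ℂ)
  have hneg : (fun k => (((-z) k : ℤ) : ℂ)) = -v := by
    ext k
    simp [v]
  have hv : ∀ j, conj (v j) = v j := fun j => map_intCast conj (z j)
  obtain ⟨m, hm⟩ := Int.even_sq_sum_sub_sum_sq z
  have hQ : conj ((B *ᵥ v) ⬝ᵥ v) = -((B *ᵥ v) ⬝ᵥ v) - 2 * m := by
    rw [conj_dotProduct_mulVec_of_real B T hB hv, dotProduct_mulVec_eq_sq_sum_sub_sum_sq T hT]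
    have hm' := congrArg (Int.cast : ℤ → ℂ) hm
    push_cast at hm'
    rw [hm', two_mul]
  have hL : conj (ξ ⬝ᵥ v) = (fun j => conj (ξ j)) ⬝ᵥ v := by
    rw [RingHom.map_dotProduct, show conj ∘ v = v from funext hv]
    rfl
  rw [hneg, mulVec_neg, neg_dotProduct, dotProduct_neg, neg_neg, dotProduct_neg,
    ← Complex.exp_conj, exp_eq_exp_iff_exists_int]
  refine ⟨m, ?_⟩
  simp only [map_mul, map_add, conj_ofReal, conj_I, map_ofNat, hQ, hL]
  ring

end

theorem riemann_theta_conj_symmetry_general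
    (g : ℕ) (B : Matrix (Fin g) (Fin g) ℂ)
    (T : Matrix (Fin g) (Fin g) ℂ)
    (hT : ∀ j k, T j k = if j = k then 0 else 1)
    (hB : ∀ j k, (starRingEnd ℂ) (B j k) = -B j k - Tᵀ j k)
    (θ : (Fin g → ℂ) → ℂ)
    (hθ : ∀ ξ : Fin g → ℂ, θ ξ = ∑' z : Fin g → ℤ,
      Complex.exp ((Real.pi : ℂ) * Complex.I *
        ((∑ j, (∑ k, B j k * (z k : ℂ)) * (z j : ℂ)) + 2 * ∑ j, ξ j * (z j : ℂ)))) :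
    ∀ ξ : Fin g → ℂ, (starRingEnd ℂ) (θ ξ) = θ (fun j => (starRingEnd ℂ) (ξ j)) := by
  have hθ_eq : ∀ ξ, θ ξ = ∑' z, thetaTerm B ξ z := hθ
  have hTt : ∀ j k, Tᵀ j k = if j = k then 0 else 1 := fun j k => by
    simp only [transpose_apply, hT, eq_comm]
  intro ξ
  rw [hθ_eq, hθ_eq]
  conv_rhs => rw [← (Equiv.neg _).tsum_eq]
  rw [starRingEnd_apply, tsum_star]
  exact tsum_congr fun z => conj_thetaTerm B Tᵀ hTt hB ξ z

/-- if `conj B = -B - 𝒯ᵀ` with `𝒯` the matrix with `0` on the diagonal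
and `1` elsewhere, then the Riemann theta function satisfies
`conj (θ ξ) = θ (conj ξ)`. -/
theorem riemann_theta_conj_symmetry
    (g : ℕ) (B : Matrix (Fin g) (Fin g) ℂ) (hsym : B.IsSymm)
    (hpos : Matrix.PosDef (Matrix.of fun i j => (B i j).im))
    (T : Matrix (Fin g) (Fin g) ℂ)
    (hT : ∀ j k, T j k = if j = k then 0 else 1)
    (hB : ∀ j k, (starRingEnd ℂ) (B j k) = -B j k - Tᵀ j k)
    (θ : (Fin g → ℂ) → ℂ)
    (hθ : ∀ ξ : Fin g → ℂ, θ ξ = ∑' z : Fin g → ℤ,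
      Complex.exp ((Real.pi : ℂ) * Complex.I *
        ((∑ j, (∑ k, B j k * (z k : ℂ)) * (z j : ℂ)) + 2 * ∑ j, ξ j * (z j : ℂ)))) :
    ∀ ξ : Fin g → ℂ, (starRingEnd ℂ) (θ ξ) = θ (fun j => (starRingEnd ℂ) (ξ j)) :=
  riemann_theta_conj_symmetry_general g B T hT hB θ hθ
end

section
/- Suppose functions u, v : ℝ × ℝ → ℂ are given by u(x,t) = u₀ e^{N₂t} θ(Ω₁x + iΩ₂t + D + Δ)θ(D) / (θ(Ω₁x + iΩ₂t + D)θ(D+Δ)) with θ satisfying θ(ξ+n) = θ(ξ) for n ∈ ℤ^g, θ(ξ+Bm) = θ(ξ)exp(-πi⟨Bm,m⟩ - 2πi⟨m,ξ⟩) for m ∈ ℤ^g, and θ(𝒮ᵀξ) = θ(ξ). Assume 𝒮ᵀΩ₁ = -Ω₁, 𝒮ᵀΩ₂ = Ω₂, 𝒮ᵀΔ = Δ + e, and D = 𝒮ᵀD + BM + W with M, W ∈ ℤ^g, 𝒮M = -M, 𝒮ᵀW = -W. Then u(x,t)/u(-x,t) = exp(2πi⟨M, 𝒮ᵀΔ⟩),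 independent of (x,t). -/
open Finset Matrix Complex

/-!
Write `z(x,t) = Ω₁x + iΩ₂t + D`. The symmetry relations give `Sᵀ z(-x,t) = z(x,t) - BM - W` and
`Sᵀ (z(-x,t) + Δ) = z(x,t) + Δ - BM - W + e`. Since `θ` is `Sᵀ`-invariant and quasi-periodic, both
`θ(z(-x,t))` and `θ(z(-x,t) + Δ)` are their values at `x` times automorphy factors whose quotient is
`exp(2πi⟨M, Δ⟩)`, so `u(-x,t) = u(x,t) exp(2πi⟨M, Δ⟩)`. Finally `⟨M, SᵀΔ⟩ = ⟨SM, Δ⟩ = -⟨M, Δ⟩`.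
-/

namespace ThetaReflection

variable {ι : Type*}

def phase (Ω₁ Ω₂ D : ι → ℂ) (x t : ℝ) : ι → ℂ := fun j => Ω₁ j * x + I * Ω₂ j * t + D j

lemma phase_eq_smul (Ω₁ Ω₂ D : ι → ℂ) (x t : ℝ) :
    phase Ω₁ Ω₂ D x t = (x : ℂ) • Ω₁ + (I * t) • Ω₂ + D := by
  ext j
  simp only [phase, Pi.add_apply, Pi.smul_apply, smul_eq_mul]
  ring

lemma phase_zero (Ω₁ Ω₂ D : ι → ℂ) : phase Ω₁ Ω₂ D 0 0 = D := by
  simp [phase_eq_smul]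

variable [Fintype ι]

lemma mulVec_phase_neg {A : Matrix ι ι ℂ} {Ω₁ Ω₂ D c : ι → ℂ}
    (hΩ₁ : A *ᵥ Ω₁ = -Ω₁) (hΩ₂ : A *ᵥ Ω₂ = Ω₂) (hD : D = A *ᵥ D + c) (x t : ℝ) :
    A *ᵥ phase Ω₁ Ω₂ D (-x) t = phase Ω₁ Ω₂ D x t - c := by
  rw [phase_eq_smul, phase_eq_smul, mulVec_add, mulVec_add, mulVec_smul, mulVec_smul, hΩ₁, hΩ₂,
    eq_sub_of_add_eq hD.symm]
  push_cast
  module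

lemma dotProduct_transpose_mulVec_of_mulVec_eq_neg {S : Matrix ι ι ℂ} {m : ι → ℂ}
    (hm : S *ᵥ m = -m) (v : ι → ℂ) : m ⬝ᵥ (Sᵀ *ᵥ v) = -(m ⬝ᵥ v) := by
  rw [dotProduct_mulVec, vecMul_transpose, hm, neg_dotProduct]

variable {B : Matrix ι ι ℂ} {θ : (ι → ℂ) → ℂ}
  (hper1 : ∀ (ξ : ι → ℂ) (n : ι → ℤ), θ (ξ + Int.cast ∘ n) = θ ξ)
  (hper2 : ∀ (ξ : ι → ℂ) (m : ι → ℤ), θ (ξ + B *ᵥ (Int.cast ∘ m)) =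
    θ ξ * exp (-Real.pi * I * (B *ᵥ (Int.cast ∘ m) ⬝ᵥ Int.cast ∘ m)
      - 2 * Real.pi * I * (Int.cast ∘ m ⬝ᵥ ξ)))
include hper1 hper2

lemma theta_sub_mulVec_add_int (ζ : ι → ℂ) (m n : ι → ℤ) :
    θ (ζ - B *ᵥ (Int.cast ∘ m) + Int.cast ∘ n) =
      θ ζ * exp (-Real.pi * I * (B *ᵥ (Int.cast ∘ m) ⬝ᵥ Int.cast ∘ m)
        + 2 * Real.pi * I * (Int.cast ∘ m ⬝ᵥ ζ)) := by
  have h := hper2 ζ (-m)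
  have hcast : (Int.cast ∘ (-m) : ι → ℂ) = -(Int.cast ∘ m) := by ext; simp
  rw [hcast, mulVec_neg, ← sub_eq_add_neg, neg_dotProduct, dotProduct_neg, neg_dotProduct] at h
  rw [hper1, h]
  congr 2
  ring

lemma theta_div_sub_mulVec_add_int (ζ Δ : ι → ℂ) (m n n' : ι → ℤ) :
    θ (ζ + Δ - B *ᵥ (Int.cast ∘ m) + Int.cast ∘ n') / θ (ζ - B *ᵥ (Int.cast ∘ m) + Int.cast ∘ n) =
      θ (ζ + Δ) / θ ζ * exp (2 * Real.pi * I * (Int.cast ∘ m ⬝ᵥ Δ)) := by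
  rw [theta_sub_mulVec_add_int hper1 hper2, theta_sub_mulVec_add_int hper1 hper2,
    mul_div_mul_comm, ← exp_sub, dotProduct_add]
  congr 2
  ring

lemma theta_phase_neg_div {A : Matrix ι ι ℂ} (hA : ∀ ξ, θ (A *ᵥ ξ) = θ ξ)
    {Ω₁ Ω₂ D Δ : ι → ℂ} {M W : ι → ℤ} (hΩ₁ : A *ᵥ Ω₁ = -Ω₁) (hΩ₂ : A *ᵥ Ω₂ = Ω₂)
    (hΔ : A *ᵥ Δ = Δ + 1) (hD : D = A *ᵥ D + (B *ᵥ (Int.cast ∘ M) + Int.cast ∘ W)) (x t : ℝ) :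
    θ (phase Ω₁ Ω₂ D (-x) t + Δ) / θ (phase Ω₁ Ω₂ D (-x) t) =
      θ (phase Ω₁ Ω₂ D x t + Δ) / θ (phase Ω₁ Ω₂ D x t) *
        exp (2 * Real.pi * I * (Int.cast ∘ M ⬝ᵥ Δ)) := by
  set z := phase Ω₁ Ω₂ D
  have hreflect : A *ᵥ z (-x) t = z x t - B *ᵥ (Int.cast ∘ M) + Int.cast ∘ (-W) := by
    rw [mulVec_phase_neg hΩ₁ hΩ₂ hD]
    ext j
    simp only [Pi.sub_apply, Pi.add_apply, Function.comp_apply, Pi.neg_apply, Int.cast_neg]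
    ring
  have hreflectΔ :
      A *ᵥ (z (-x) t + Δ) = z x t + Δ - B *ᵥ (Int.cast ∘ M) + Int.cast ∘ (1 - W) := by
    rw [mulVec_add, hreflect, hΔ]
    ext j
    simp only [Pi.add_apply, Pi.sub_apply, Function.comp_apply, Pi.neg_apply, Int.cast_neg,
      Pi.one_apply, Int.cast_sub, Int.cast_one]
    ring
  rw [← hA, ← hA (z (-x) t), hreflectΔ, hreflect]
  exact theta_div_sub_mulVec_add_int hper1 hper2 _ _ _ _ _

end ThetaReflection

open ThetaReflection in
theorem algebro_geometric_ratio_constant_general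
    (g : ℕ)
    (B : Matrix (Fin g) (Fin g) ℂ)
    (S : Matrix (Fin g) (Fin g) ℂ)
    (θ : (Fin g → ℂ) → ℂ)
    (hper1 : ∀ (ξ : Fin g → ℂ) (n : Fin g → ℤ), θ (fun j => ξ j + (n j : ℂ)) = θ ξ)
    (hper2 : ∀ (ξ : Fin g → ℂ) (m : Fin g → ℤ),
      θ (fun j => ξ j + ∑ k, B j k * (m k : ℂ)) =
        θ ξ * Complex.exp (-(Real.pi : ℂ) * Complex.I *
            (∑ j, (∑ k, B j k * (m k : ℂ)) * (m j : ℂ))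
          - 2 * (Real.pi : ℂ) * Complex.I * ∑ j, (m j : ℂ) * ξ j))
    (hSinv : ∀ ξ : Fin g → ℂ, θ (fun j => ∑ k, S k j * ξ k) = θ ξ)
    (Ω₁ Ω₂ D Δ : Fin g → ℂ)
    (hΩ₁ : ∀ j : Fin g, ∑ k, S k j * Ω₁ k = -Ω₁ j)
    (hΩ₂ : ∀ j : Fin g, ∑ k, S k j * Ω₂ k = Ω₂ j)
    (hΔ : ∀ j : Fin g, ∑ k, S k j * Δ k = Δ j + 1)
    (M W : Fin g → ℤ)
    (hM : ∀ j : Fin g, ∑ k, S j k * (M k : ℂ) = -(M j : ℂ))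
    (hD : ∀ j : Fin g, D j =
      (∑ k, S k j * D k) + (∑ k, B j k * (M k : ℂ)) + (W j : ℂ))
    (u₀ N₂ : ℂ) (hu₀ : u₀ ≠ 0)
    (u : ℝ × ℝ → ℂ)
    (hu : ∀ x t : ℝ, u (x, t) = u₀ * Complex.exp (N₂ * t) *
      θ (fun j => Ω₁ j * x + Complex.I * Ω₂ j * t + D j + Δ j) * θ D /
      (θ (fun j => Ω₁ j * x + Complex.I * Ω₂ j * t + D j) *
        θ (fun j => D j + Δ j)))
    (hθne : ∀ x t : ℝ,
      θ (fun j => Ω₁ j * x + Complex.I * Ω₂ j * t + D j) ≠ 0 ∧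
      θ (fun j => Ω₁ j * x + Complex.I * Ω₂ j * t + D j + Δ j) ≠ 0) :
    ∀ x t : ℝ, u (x, t) / u (-x, t) =
      Complex.exp (2 * (Real.pi : ℂ) * Complex.I *
        ∑ j, (M j : ℂ) * (∑ k, S k j * Δ k)) := by
  intro x t
  set z := phase Ω₁ Ω₂ D
  have hne : ∀ x t, θ (z x t) ≠ 0 ∧ θ (z x t + Δ) ≠ 0 := hθne
  have hu' : ∀ x, u (x, t) = u₀ * exp (N₂ * t) * θ D / θ (D + Δ) * (θ (z x t + Δ) / θ (z x t)) := by
    intro x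
    rw [show u (x, t) = u₀ * exp (N₂ * t) * θ (z x t + Δ) * θ D / (θ (z x t) * θ (D + Δ)) from hu x t]
    ring
  have hratio := theta_phase_neg_div (fun ξ n => hper1 ξ n) (fun ξ m => hper2 ξ m)
    (A := Sᵀ) hSinv (funext hΩ₁) (funext hΩ₂) (funext hΔ)
    (funext fun j => (hD j).trans (add_assoc _ _ _)) x t
  have hu_ne : u (x, t) ≠ 0 := by
    have hθD : θ D ≠ 0 := phase_zero Ω₁ Ω₂ D ▸ (hne 0 0).1
    have hθDΔ : θ (D + Δ) ≠ 0 := phase_zero Ω₁ Ω₂ D ▸ (hne 0 0).2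
    rw [hu']
    exact mul_ne_zero (div_ne_zero (mul_ne_zero (mul_ne_zero hu₀ (exp_ne_zero _)) hθD) hθDΔ)
      (div_ne_zero (hne x t).2 (hne x t).1)
  rw [hu' (-x), hratio, ← mul_assoc, ← hu' x, div_mul_cancel_left₀ hu_ne, ← Complex.exp_neg]
  change _ = exp (2 * Real.pi * I * (Int.cast ∘ M ⬝ᵥ Sᵀ *ᵥ Δ))
  rw [dotProduct_transpose_mulVec_of_mulVec_eq_neg (S := S) (m := Int.cast ∘ M) (funext hM), mul_neg]

/-- under the symmetries induced by the holomorphic involution,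
the ratio `u(x,t)/u(-x,t)` of the algebro-geometric solution is the constant
`exp(2πi⟨M, 𝒮ᵀΔ⟩)`. -/
theorem algebro_geometric_ratio_constant
    (g : ℕ) (hg : Odd g)
    (B : Matrix (Fin g) (Fin g) ℂ) (hBsym : B.IsSymm)
    (hpos : Matrix.PosDef (Matrix.of fun i j => (B i j).im))
    (S : Matrix (Fin g) (Fin g) ℂ)
    (hS : ∀ j k : Fin g, S j k = if j = Fin.rev k then -1 else 0)
    (hBS : B * S = Sᵀ * B)
    (θ : (Fin g → ℂ) → ℂ)
    (hper1 : ∀ (ξ : Fin g → ℂ) (n : Fin g → ℤ), θ (fun j => ξ j + (n j : ℂ)) = θ ξ)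
    (hper2 : ∀ (ξ : Fin g → ℂ) (m : Fin g → ℤ),
      θ (fun j => ξ j + ∑ k, B j k * (m k : ℂ)) =
        θ ξ * Complex.exp (-(Real.pi : ℂ) * Complex.I *
            (∑ j, (∑ k, B j k * (m k : ℂ)) * (m j : ℂ))
          - 2 * (Real.pi : ℂ) * Complex.I * ∑ j, (m j : ℂ) * ξ j))
    (hSinv : ∀ ξ : Fin g → ℂ, θ (fun j => ∑ k, S k j * ξ k) = θ ξ)
    (Ω₁ Ω₂ D Δ : Fin g → ℂ)
    (hΩ₁ : ∀ j : Fin g, ∑ k, S k j * Ω₁ k = -Ω₁ j)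
    (hΩ₂ : ∀ j : Fin g, ∑ k, S k j * Ω₂ k = Ω₂ j)
    (hΔ : ∀ j : Fin g, ∑ k, S k j * Δ k = Δ j + 1)
    (M W : Fin g → ℤ)
    (hM : ∀ j : Fin g, ∑ k, S j k * (M k : ℂ) = -(M j : ℂ))
    (hW : ∀ j : Fin g, ∑ k, S k j * (W k : ℂ) = -(W j : ℂ))
    (hD : ∀ j : Fin g, D j =
      (∑ k, S k j * D k) + (∑ k, B j k * (M k : ℂ)) + (W j : ℂ))
    (u₀ N₂ : ℂ) (hu₀ : u₀ ≠ 0)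
    (u : ℝ × ℝ → ℂ)
    (hu : ∀ x t : ℝ, u (x, t) = u₀ * Complex.exp (N₂ * t) *
      θ (fun j => Ω₁ j * x + Complex.I * Ω₂ j * t + D j + Δ j) * θ D /
      (θ (fun j => Ω₁ j * x + Complex.I * Ω₂ j * t + D j) *
        θ (fun j => D j + Δ j)))
    (hθne : ∀ x t : ℝ,
      θ (fun j => Ω₁ j * x + Complex.I * Ω₂ j * t + D j) ≠ 0 ∧
      θ (fun j => Ω₁ j * x + Complex.I * Ω₂ j * t + D j + Δ j) ≠ 0) :
    ∀ x t : ℝ, u (x, t) / u (-x, t) =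
      Complex.exp (2 * (Real.pi : ℂ) * Complex.I *
        ∑ j, (M j : ℂ) * (∑ k, S k j * Δ k)) :=
  algebro_geometric_ratio_constant_general g B S θ hper1 hper2 hSinv Ω₁ Ω₂ D Δ hΩ₁ hΩ₂ hΔ M W hM hD
    u₀ N₂ hu₀ u hu hθne
end
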